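/- arXiv:dg-ga/9601003 — 4 statements merged into one kernel-verified Lean document; each statement's English description precedes it below -/
import Mathlib

section
/- Let S¹ act continuously on a topological space M, let φ : M → ℝ be a continuous S¹-invariant function, and let a ∈ ℝ. Then the cut space M^a = ψ⁻¹(a)/S¹ is in bijection with the disjoint union of the sublevel set M_{φ<a} = {m ∈ M : φ(m) < a} and the quotient M_a = φ⁻¹(a)/S¹. Explicitly, the map sending m ∈ M_{φ<a} to the S¹-orbit of (m, √(a − φ(m))) ∈ ψ⁻¹(a), and sending the S¹-orbit of m ∈ φ⁻¹(a) to the S¹-orbit of (m, 0), is a bijection from M_{φ<a} ⊔ φ⁻¹(a)/S¹ onto M^a. -/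
variable {M : Type*} [TopologicalSpace M] [MulAction Circle M]

/-- The level set `ψ⁻¹(a)` of `ψ(m, z) = φ(m) + |z|²` in `M × ℂ`. -/
abbrev PsiLevel (φ : M → ℝ) (a : ℝ) : Type _ :=
  {p : M × ℂ // φ p.1 + Complex.normSq p.2 = a}

/-- The orbit relation of the diagonal `S¹`-action on the level set `ψ⁻¹(a)`. -/
abbrev cutRel (φ : M → ℝ) (a : ℝ) : PsiLevel φ a → PsiLevel φ a → Prop :=
  fun p q => ∃ w : Circle, w • p.1.1 = q.1.1 ∧ (w : ℂ) * p.1.2 = q.1.2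

/-- The cut space `M^a = ψ⁻¹(a)/S¹`. -/
abbrev CutSpace (φ : M → ℝ) (a : ℝ) : Type _ := Quot (cutRel φ a)

/-- The orbit relation of the `S¹`-action on the level set `φ⁻¹(a)`. -/
abbrev levelRel (φ : M → ℝ) (a : ℝ) : {m : M // φ m = a} → {m : M // φ m = a} → Prop :=
  fun p q => ∃ w : Circle, w • p.1 = q.1

/-- The map `M_{φ<a} ⊔ φ⁻¹(a)/S¹ → M^a` of STATEMENT 3: a point `m` with `φ(m) < a` is sent
to the orbit of `(m, √(a - φ(m)))`, and the orbit of `m ∈ φ⁻¹(a)` is sent to the orbit of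
`(m, 0)`. -/
noncomputable def cutDecompMap (φ : M → ℝ) (a : ℝ) :
    {m : M // φ m < a} ⊕ Quot (levelRel φ a) → CutSpace φ a :=
  Sum.elim
    (fun m => Quot.mk _ ⟨(m.1, (Real.sqrt (a - φ m.1) : ℂ)), by
      have h : (0 : ℝ) ≤ a - φ m.1 := by linarith [m.2]
      rw [Complex.normSq_ofReal, Real.mul_self_sqrt h]; ring⟩)
    (Quot.lift
      (fun m => Quot.mk _ ⟨(m.1, 0), by simp [m.2]⟩)
      (fun p q hpq => by
        obtain ⟨w, hw⟩ := hpq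
        exact Quot.sound ⟨w, hw, by simp⟩))

/-! Every `S¹`-orbit in `ψ⁻¹(a)` either meets `M × {0}`, where the orbits are
those of `φ⁻¹(a)`, or consists of points `(m, z)` with `z ≠ 0`; rotating by the phase of `z`
moves such a point to a unique point `(m', r)` with `r > 0` real, and then `r = √(a - φ m')`
because `ψ = a`. -/

theorem Circle.exists_coe_mul_norm_eq (z : ℂ) : ∃ w : Circle, (w : ℂ) * ‖z‖ = z :=
  ⟨Circle.exp (Complex.arg z), by
    rw [Circle.coe_exp, mul_comm, Complex.norm_mul_exp_arg_mul_I]⟩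

theorem Circle.eq_one_of_coe_mul_ofReal_eq {w : Circle} {r s : ℝ} (hr : 0 < r) (hs : 0 ≤ s)
    (h : (w : ℂ) * r = s) : w = 1 := by
  have hrs : r = s := by
    simpa [Circle.norm_coe, abs_of_pos hr, abs_of_nonneg hs] using congrArg (‖·‖) h
  subst hrs
  exact Subtype.ext <|
    mul_right_cancel₀ (Complex.ofReal_ne_zero.mpr hr.ne') (h.trans (one_mul _).symm)

section CutSpace

variable {X : Type*} [MulAction Circle X]

theorem cutRel_equivalence (φ : X → ℝ) (a : ℝ) : Equivalence (cutRel φ a) where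
  refl _ := ⟨1, one_smul _ _, one_mul _⟩
  symm := by
    rintro p q ⟨w, h1, h2⟩
    refine ⟨w⁻¹, by rw [← h1, inv_smul_smul], ?_⟩
    rw [← h2, Circle.coe_inv, inv_mul_cancel_left₀ (Circle.coe_ne_zero w)]
  trans := by
    rintro p q r ⟨w, h1, h2⟩ ⟨w', h1', h2'⟩
    refine ⟨w' * w, by rw [mul_smul, h1, h1'], ?_⟩
    rw [Circle.coe_mul, mul_assoc, h2, h2']

variable {φ : X → ℝ} {a : ℝ}

theorem cutRel_of_mk_eq {p q : PsiLevel φ a}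
    (h : Quot.mk (cutRel φ a) p = Quot.mk (cutRel φ a) q) : cutRel φ a p q :=
  (cutRel_equivalence φ a).eqvGen_iff.mp (Quot.eq.mp h)

theorem cutDecompMap_inl_injective :
    Function.Injective fun m : {m : X // φ m < a} => cutDecompMap φ a (Sum.inl m) := by
  rintro ⟨m, hm⟩ ⟨m', hm'⟩ h
  obtain ⟨w, hmm', hsqrt⟩ := cutRel_of_mk_eq h
  have hw : w = 1 := Circle.eq_one_of_coe_mul_ofReal_eq
    (Real.sqrt_pos.mpr (sub_pos.mpr hm)) (Real.sqrt_nonneg _) hsqrt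
  subst hw
  exact Subtype.ext ((one_smul _ m).symm.trans hmm')

theorem cutDecompMap_inr_injective :
    Function.Injective fun q : Quot (levelRel φ a) => cutDecompMap φ a (Sum.inr q) := by
  rintro ⟨p⟩ ⟨p'⟩ h
  obtain ⟨w, hpp', -⟩ := cutRel_of_mk_eq h
  exact Quot.sound ⟨w, hpp'⟩

theorem cutDecompMap_inl_ne_inr (m : {m : X // φ m < a}) (q : Quot (levelRel φ a)) :
    cutDecompMap φ a (Sum.inl m) ≠ cutDecompMap φ a (Sum.inr q) := by
  induction q using Quot.ind
  intro h
  obtain ⟨w, -, hsqrt⟩ := cutRel_of_mk_eq h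
  have hpos : (0 : ℝ) < Real.sqrt (a - φ m) := Real.sqrt_pos.mpr (sub_pos.mpr m.2)
  exact mul_ne_zero (Circle.coe_ne_zero w) (Complex.ofReal_ne_zero.mpr hpos.ne') hsqrt

theorem cutDecompMap_injective : Function.Injective (cutDecompMap φ a) :=
  cutDecompMap_inl_injective.sumElim cutDecompMap_inr_injective cutDecompMap_inl_ne_inr

theorem cutDecompMap_surjective (hφinv : ∀ (w : Circle) (m : X), φ (w • m) = φ m) :
    Function.Surjective (cutDecompMap φ a) := by
  rintro ⟨⟨m, z⟩, hψ⟩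
  by_cases hz : z = 0
  · subst hz
    exact ⟨Sum.inr (Quot.mk _ ⟨m, by simpa using hψ⟩), rfl⟩
  obtain ⟨w, hw⟩ := Circle.exists_coe_mul_norm_eq z
  have hφ : φ (w⁻¹ • m) = a - Complex.normSq z := by rw [hφinv]; linarith
  have hlt : φ (w⁻¹ • m) < a := by
    rw [hφ]; linarith [Complex.normSq_pos.mpr hz]
  refine ⟨Sum.inl ⟨w⁻¹ • m, hlt⟩, Quot.sound ⟨w, smul_inv_smul w m, ?_⟩⟩
  change (w : ℂ) * (Real.sqrt (a - φ (w⁻¹ • m)) : ℂ) = z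
  rw [hφ, sub_sub_cancel, Complex.normSq_eq_norm_sq, Real.sqrt_sq (norm_nonneg z), hw]

end CutSpace

theorem cutSpace_decomposition_general
    (φ : M → ℝ) (hφinv : ∀ (w : Circle) (m : M), φ (w • m) = φ m)
    (a : ℝ) :
    Function.Bijective (cutDecompMap φ a) :=
  ⟨cutDecompMap_injective, cutDecompMap_surjective hφinv⟩

/-- For a continuous `S¹`-action on `M`, a continuous invariant `φ : M → ℝ`
and `a ∈ ℝ`, the cut space `M^a = ψ⁻¹(a)/S¹` is in bijection with the disjoint union of the
sublevel set `M_{φ<a}` and the quotient `φ⁻¹(a)/S¹`, via the explicit map `cutDecompMap`. -/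
theorem cutSpace_decomposition [ContinuousSMul Circle M]
    (φ : M → ℝ) (hφc : Continuous φ) (hφinv : ∀ (w : Circle) (m : M), φ (w • m) = φ m)
    (a : ℝ) :
    Function.Bijective (cutDecompMap φ a) :=
  cutSpace_decomposition_general φ hφinv a
end

section
/- Let M be a Hausdorff topological space with a continuous S¹-action, and let φ : M → ℝ be a continuous S¹-invariant function which is proper (preimages of compact sets are compact) and bounded from below. Then for every a ∈ ℝ the level set ψ⁻¹(a) = {(m, z) ∈ M × ℂ : φ(m) + |z|² = a} is compact, and consequently the cut space M^a = ψ⁻¹(a)/S¹ is compact. -/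
variable {M : Type*} [TopologicalSpace M] [MulAction Circle M]

/-- If `M` is Hausdorff with a continuous `S¹`-action and `φ : M → ℝ` is a
continuous `S¹`-invariant function which is proper and bounded from below, then for every
`a ∈ ℝ` the level set `ψ⁻¹(a) = {(m, z) : φ(m) + |z|² = a}` is compact, and consequently
the cut space `M^a = ψ⁻¹(a)/S¹` is compact. -/
theorem psiLevel_compact_and_cutSpace_compact [T2Space M] [ContinuousSMul Circle M]
    (φ : M → ℝ) (hφc : Continuous φ) (hφinv : ∀ (w : Circle) (m : M), φ (w • m) = φ m)
    (hproper : ∀ K : Set ℝ, IsCompact K → IsCompact (φ ⁻¹' K))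
    (hbdd : ∃ b : ℝ, ∀ m : M, b ≤ φ m) (a : ℝ) :
    IsCompact {p : M × ℂ | φ p.1 + Complex.normSq p.2 = a} ∧
      CompactSpace (CutSpace φ a) := by
  obtain ⟨b, hb⟩ := hbdd
  have hcomp : IsCompact {p : M × ℂ | φ p.1 + Complex.normSq p.2 = a} := by
    have hclosed : IsClosed {p : M × ℂ | φ p.1 + Complex.normSq p.2 = a} := by
      have : Continuous fun p : M × ℂ => φ p.1 + Complex.normSq p.2 :=
        (hφc.comp continuous_fst).add
          (Complex.continuous_normSq.comp continuous_snd)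
      exact isClosed_eq this continuous_const
    have hK : IsCompact ((φ ⁻¹' Set.Icc b a) ×ˢ
        Metric.closedBall (0 : ℂ) (Real.sqrt (a - b))) :=
      (hproper _ isCompact_Icc).prod (isCompact_closedBall _ _)
    refine hK.of_isClosed_subset hclosed ?_
    rintro ⟨m, z⟩ h
    simp only [Set.mem_setOf_eq] at h
    have hnsq : 0 ≤ Complex.normSq z := Complex.normSq_nonneg z
    constructor
    · exact ⟨hb m, by linarith⟩
    · have h1 : Complex.normSq z ≤ a - b := by have := hb m; linarith
      have h2 : ‖z‖ ^ 2 ≤ a - b := by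
        rwa [← Complex.normSq_eq_norm_sq]
      simp only [Metric.mem_closedBall, dist_zero_right]
      nlinarith [Real.sq_sqrt (show (0:ℝ) ≤ a - b by nlinarith),
        Real.sqrt_nonneg (a - b), norm_nonneg z]
  refine ⟨hcomp, ?_⟩
  haveI : CompactSpace (PsiLevel φ a) := isCompact_iff_compactSpace.mp hcomp
  have hsurj : Function.Surjective (Quot.mk (cutRel φ a)) := Quot.exists_rep
  have : IsCompact (Set.univ : Set (CutSpace φ a)) := by
    rw [← hsurj.range_eq]
    exact isCompact_range continuous_quot_mk
  exact ⟨this⟩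
end

section
/- Let V be a finite-dimensional real vector space and let ω be a nondegenerate alternating bilinear form on V. Then there exists a linear map J : V → V with J ∘ J = −id_V which is compatible with ω, meaning: ω(Jx, Jy) = ω(x, y) for all x, y ∈ V, and the bilinear form g(x, y) = ω(x, Jy) is symmetric and positive definite. -/
/-!
Choose `x, y` with `ω x y = 1`. Subtracting `ω x v • y - ω y v • x` projects `v` onto the
`ω`-orthogonal complement `W` of `span {x, y}`, which gives `V = span {x, y} ⊕ W` with `ω`
nondegenerate on `W`. By induction on the dimension, `W` carries a compatible complex structure
`J'`, and `x ↦ y ↦ -x` extends it to `V`. The metric `ω(·, J ·)` is then the sum of the standard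
Euclidean metric in the coordinates `ω x ·, ω y ·` and the metric of `J'` on `W`.
-/

open Module LinearMap

section

variable {K V : Type*} [AddCommGroup V]

structure IsCompatibleComplexStructure [CommRing K] [PartialOrder K] [Module K V]
    (ω : V →ₗ[K] V →ₗ[K] K) (J : V →ₗ[K] V) : Prop where
  comp_self : J ∘ₗ J = -LinearMap.id
  apply_apply : ∀ x y, ω (J x) (J y) = ω x y
  symm : ∀ x y, ω x (J y) = ω y (J x)
  pos : ∀ x, x ≠ 0 → 0 < ω x (J x)

theorem IsCompatibleComplexStructure.zero [CommRing K] [PartialOrder K] [Module K V]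
    [Subsingleton V]
    (ω : V →ₗ[K] V →ₗ[K] K) : IsCompatibleComplexStructure ω 0 where
  comp_self := Subsingleton.elim _ _
  apply_apply x y := by simp [Subsingleton.elim x 0]
  symm x y := by simp
  pos x hx := absurd (Subsingleton.elim x 0) hx

theorem LinearMap.SeparatingLeft.exists_apply_eq_one [Field K] [Module K V] [Nontrivial V]
    {ω : V →ₗ[K] V →ₗ[K] K} (hω : ω.SeparatingLeft) : ∃ x y, ω x y = 1 := by
  obtain ⟨x, hx⟩ := exists_ne (0 : V)
  obtain ⟨y, hy⟩ : ∃ y, ω x y ≠ 0 := by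
    by_contra! h
    exact hx (hω x h)
  exact ⟨x, (ω x y)⁻¹ • y, by simp [inv_mul_cancel₀ hy]⟩

def symplecticCompl [CommRing K] [Module K V] (ω : V →ₗ[K] V →ₗ[K] K) (x y : V) :
    Submodule K V :=
  ker (ω x) ⊓ ker (ω y)

namespace symplecticCompl

section Field

variable [Field K] [Module K V] {ω : V →ₗ[K] V →ₗ[K] K} {x y : V}

theorem mem_iff {v : V} : v ∈ symplecticCompl ω x y ↔ ω x v = 0 ∧ ω y v = 0 := Iff.rfl

variable (hω : ω.IsAlt) (hxy : ω x y = 1)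
include hω hxy

theorem sub_add_mem (v : V) : v - ω x v • y + ω y v • x ∈ symplecticCompl ω x y := by
  have hyx : ω y x = -1 := by rw [← hω.neg, hxy]
  simp [mem_iff, hxy, hyx, hω x, hω y]

def proj : V →ₗ[K] symplecticCompl ω x y :=
  (LinearMap.id - (ω x).smulRight y + (ω y).smulRight x).codRestrict _ (sub_add_mem hω hxy)

theorem coe_proj (v : V) : (proj hω hxy v : V) = v - ω x v • y + ω y v • x := rfl

theorem proj_of_mem (w : symplecticCompl ω x y) : proj hω hxy w = w := by
  ext
  simp [coe_proj, (mem_iff.1 w.2).1, (mem_iff.1 w.2).2]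

theorem apply_eq_add_apply_proj (v u : V) :
    ω v u = ω x v * ω y u - ω y v * ω x u + ω (proj hω hxy v) (proj hω hxy u) := by
  set w := proj hω hxy v
  have hx : ω w x = 0 := hω.eq_iff.1 (mem_iff.1 w.2).1
  have hy : ω w y = 0 := hω.eq_iff.1 (mem_iff.1 w.2).2
  have hv : v = ω x v • y - ω y v • x + w := by rw [coe_proj]; abel
  have hwu : ω w u = ω w (proj hω hxy u) := by
    simp only [coe_proj, map_add, map_sub, map_smul, hx, hy, smul_zero, sub_zero, add_zero]
  rw [← hwu]
  conv_lhs => rw [hv]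
  simp only [map_add, map_sub, map_smul, LinearMap.add_apply, LinearMap.sub_apply,
    LinearMap.smul_apply, smul_eq_mul]

theorem separatingLeft_domRestrict (hsep : ω.SeparatingLeft) :
    (ω.domRestrict₁₂ (symplecticCompl ω x y) (symplecticCompl ω x y)).SeparatingLeft := by
  intro w hw
  ext
  refine hsep w fun u ↦ ?_
  rw [apply_eq_add_apply_proj hω hxy, (mem_iff.1 w.2).1, (mem_iff.1 w.2).2, proj_of_mem]
  simpa [domRestrict₁₂_apply] using hw (proj hω hxy u)

theorem finrank_lt [FiniteDimensional K V] :
    finrank K (symplecticCompl ω x y) < finrank K V := by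
  refine Submodule.finrank_lt fun htop ↦ ?_
  have hyx : ω y x = 0 := (mem_iff.1 (htop ▸ Submodule.mem_top : x ∈ symplecticCompl ω x y)).2
  rw [← hω.neg, hxy] at hyx
  exact one_ne_zero (neg_eq_zero.1 hyx)

/-- On `span {x, y}` this acts by `x ↦ y ↦ -x`. -/
def extend (J' : symplecticCompl ω x y →ₗ[K] symplecticCompl ω x y) : V →ₗ[K] V :=
  -(ω y).smulRight y - (ω x).smulRight x + (symplecticCompl ω x y).subtype ∘ₗ J' ∘ₗ proj hω hxy

variable (J' : symplecticCompl ω x y →ₗ[K] symplecticCompl ω x y)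

theorem extend_apply (v : V) :
    extend hω hxy J' v = -ω y v • y - ω x v • x + J' (proj hω hxy v) := by
  simp [extend, neg_smul]

theorem apply_extend_left (v : V) : ω x (extend hω hxy J' v) = -ω y v := by
  simp [extend_apply, hxy, hω x, (mem_iff.1 (J' _).2).1]

theorem apply_extend_right (v : V) : ω y (extend hω hxy J' v) = ω x v := by
  have hyx : ω y x = -1 := by rw [← hω.neg, hxy]
  simp [extend_apply, hyx, hω y, (mem_iff.1 (J' _).2).2]

theorem proj_extend (v : V) : proj hω hxy (extend hω hxy J' v) = J' (proj hω hxy v) := by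
  ext
  rw [coe_proj, apply_extend_left, apply_extend_right, extend_apply]
  abel

theorem apply_extend (v u : V) : ω v (extend hω hxy J' u) =
    ω x v * ω x u + ω y v * ω y u + ω (proj hω hxy v) (J' (proj hω hxy u)) := by
  rw [apply_eq_add_apply_proj hω hxy, apply_extend_left, apply_extend_right, proj_extend]
  ring

theorem extend_apply_extend (v u : V) : ω (extend hω hxy J' v) (extend hω hxy J' u) =
    ω x v * ω y u - ω y v * ω x u + ω (J' (proj hω hxy v)) (J' (proj hω hxy u)) := by
  rw [apply_eq_add_apply_proj hω hxy, apply_extend_left, apply_extend_left, apply_extend_right,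
    apply_extend_right, proj_extend, proj_extend]
  ring

end Field

variable [Field K] [LinearOrder K] [IsStrictOrderedRing K] [Module K V]
  {ω : V →ₗ[K] V →ₗ[K] K} {x y : V} (hω : ω.IsAlt) (hxy : ω x y = 1)
  {J' : symplecticCompl ω x y →ₗ[K] symplecticCompl ω x y}

theorem isCompatibleComplexStructure_extend
    (hJ' : IsCompatibleComplexStructure (ω.domRestrict₁₂ _ _) J') :
    IsCompatibleComplexStructure ω (extend hω hxy J') where
  comp_self := by
    ext v
    have hJ'J' : J' (J' (proj hω hxy v)) = -proj hω hxy v := LinearMap.congr_fun hJ'.comp_self _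
    rw [comp_apply, extend_apply _ _ _ (extend hω hxy J' v), apply_extend_left,
      apply_extend_right, proj_extend, hJ'J']
    simp only [Submodule.coe_neg, coe_proj, LinearMap.neg_apply, LinearMap.id_apply]
    module
  apply_apply v u := by
    rw [extend_apply_extend, apply_eq_add_apply_proj hω hxy v u]
    exact congrArg _ (hJ'.apply_apply _ _)
  symm v u := by
    rw [apply_extend, apply_extend]
    have := hJ'.symm (proj hω hxy v) (proj hω hxy u)
    simp only [domRestrict₁₂_apply] at this
    rw [this]
    ring
  pos v hv := by
    rw [apply_extend]
    by_cases hW : ω x v = 0 ∧ ω y v = 0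
    · have hπv : proj hω hxy v = ⟨v, hW⟩ := proj_of_mem hω hxy ⟨v, hW⟩
      have := hJ'.pos ⟨v, hW⟩ (mt (congrArg Subtype.val) hv)
      simp only [domRestrict₁₂_apply] at this
      rw [hW.1, hW.2, hπv]
      simpa using this
    · have hg : 0 ≤ ω (proj hω hxy v) (J' (proj hω hxy v)) := by
        rcases eq_or_ne (proj hω hxy v) 0 with h | h
        · simp [h]
        · exact (hJ'.pos _ h).le
      have hsq : 0 < ω x v * ω x v + ω y v * ω y v := by
        rcases not_and_or.1 hW with h | h
        · exact add_pos_of_pos_of_nonneg (mul_self_pos.2 h) (mul_self_nonneg _)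
        · exact add_pos_of_nonneg_of_pos (mul_self_nonneg _) (mul_self_pos.2 h)
      linarith

end symplecticCompl

theorem exists_isCompatibleComplexStructure [Field K] [LinearOrder K] [IsStrictOrderedRing K]
    [Module K V] [FiniteDimensional K V] {ω : V →ₗ[K] V →ₗ[K] K} (hω : ω.IsAlt)
    (hsep : ω.SeparatingLeft) : ∃ J, IsCompatibleComplexStructure ω J := by
  induction h : finrank K V using Nat.strong_induction_on generalizing V with
  | _ n ih =>
    cases subsingleton_or_nontrivial V
    · exact ⟨0, .zero ω⟩
    obtain ⟨x, y, hxy⟩ := hsep.exists_apply_eq_one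
    obtain ⟨J', hJ'⟩ := ih _ (h ▸ symplecticCompl.finrank_lt hω hxy)
      (V := symplecticCompl ω x y) (fun w ↦ hω w)
      (symplecticCompl.separatingLeft_domRestrict hω hxy hsep) rfl
    exact ⟨_, symplecticCompl.isCompatibleComplexStructure_extend hω hxy hJ'⟩

end

/-- Every symplectic vector space `(V, ω)` (a finite-dimensional real vector
space with a nondegenerate alternating bilinear form) admits a complex structure `J`
(`J² = -id`) compatible with `ω`: `ω(Jx, Jy) = ω(x, y)` and `g(x, y) = ω(x, Jy)` is
symmetric and positive definite. -/
theorem exists_compatible_complex_structure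
    {V : Type*} [AddCommGroup V] [Module ℝ V] [FiniteDimensional ℝ V]
    (ω : V →ₗ[ℝ] V →ₗ[ℝ] ℝ)
    (halt : ∀ x : V, ω x x = 0)
    (hnondeg : ∀ x : V, (∀ y : V, ω x y = 0) → x = 0) :
    ∃ J : V →ₗ[ℝ] V,
      J ∘ₗ J = -LinearMap.id ∧
      (∀ x y : V, ω (J x) (J y) = ω x y) ∧
      (∀ x y : V, ω x (J y) = ω y (J x)) ∧
      (∀ x : V, x ≠ 0 → 0 < ω x (J x)) := by
  obtain ⟨J, hJ⟩ := exists_isCompatibleComplexStructure halt hnondeg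
  exact ⟨J, hJ.comp_self, hJ.apply_apply, hJ.symm, hJ.pos⟩
end

section
/- Let V be a finite-dimensional real vector space with a nondegenerate alternating bilinear form ω, and let J₀ and J₁ be two complex structures on V, each compatible with ω. Then J₀ and J₁ are conjugate by a linear symplectomorphism: there exists a linear automorphism A : V → V with ω(Ax, Ay) = ω(x, y) for all x, y ∈ V, such that A ∘ J₀ = J₁ ∘ A. -/
/-!
A compatible complex structure `J` makes `V` a complex vector space, with `i` acting as `J`,
carrying the Hermitian inner product `⟪x, y⟫ = ω x (J y) + i ω x y`, whose imaginary part
is `ω`. Complex inner product spaces of the same dimension are isometric (match orthonormal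
bases), and a complex-linear isometry preserves `ω = Im ⟪·, ·⟫` and commutes with `J = i • ·`.
-/

open Module ComplexConjugate

theorem exists_linearIsometryEquiv_of_finrank_eq {𝕜 E F : Type*} [RCLike 𝕜]
    [NormedAddCommGroup E] [InnerProductSpace 𝕜 E] [FiniteDimensional 𝕜 E]
    [NormedAddCommGroup F] [InnerProductSpace 𝕜 F] [FiniteDimensional 𝕜 F]
    (h : finrank 𝕜 E = finrank 𝕜 F) : Nonempty (E ≃ₗᵢ[𝕜] F) :=
  ⟨(stdOrthonormalBasis 𝕜 E).repr.trans
    ((stdOrthonormalBasis 𝕜 F).reindex (finCongr h.symm)).repr.symm⟩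

structure CompatibleComplexStructure (V : Type*) [AddCommGroup V] [Module ℝ V] where
  ω : V →ₗ[ℝ] V →ₗ[ℝ] ℝ
  J : V →ₗ[ℝ] V
  isAlt : ω.IsAlt
  J_comp_J : J ∘ₗ J = -LinearMap.id
  symm : ∀ x y, ω x (J y) = ω y (J x)
  pos : ∀ x, x ≠ 0 → 0 < ω x (J x)

namespace CompatibleComplexStructure

variable {V : Type*} [AddCommGroup V] [Module ℝ V] (T : CompatibleComplexStructure V)

theorem J_J (x : V) : T.J (T.J x) = -x := LinearMap.congr_fun T.J_comp_J x

theorem ω_J_left (x y : V) : T.ω (T.J x) y = -T.ω x (T.J y) := by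
  rw [← T.isAlt.neg, T.symm]

def hermitian (x y : V) : ℂ := ⟨T.ω x (T.J y), T.ω x y⟩

theorem conj_hermitian (x y : V) : conj (T.hermitian y x) = T.hermitian x y := by
  apply Complex.ext
  · simp [hermitian, T.symm]
  · simp [hermitian, ← T.isAlt.neg x y]

theorem hermitian_add_left (x y z : V) :
    T.hermitian (x + y) z = T.hermitian x z + T.hermitian y z := by
  apply Complex.ext <;> simp [hermitian]

theorem hermitian_smul_left (c : ℂ) (x y : V) :
    T.hermitian (c.re • x + c.im • T.J x) y = conj c * T.hermitian x y := by
  apply Complex.ext <;> simp [hermitian, ω_J_left, J_J]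

theorem hermitian_self_re_nonneg (x : V) : 0 ≤ (T.hermitian x x).re := by
  rcases eq_or_ne x 0 with rfl | hx
  · simp [hermitian]
  · exact (T.pos x hx).le

theorem eq_zero_of_hermitian_self_eq_zero {x : V} (hx : T.hermitian x x = 0) : x = 0 := by
  by_contra h
  exact (T.pos x h).ne' (congrArg Complex.re hx)

def ComplexSpace (_ : CompatibleComplexStructure V) : Type _ := V

instance : AddCommGroup T.ComplexSpace := inferInstanceAs (AddCommGroup V)
instance : Module ℝ T.ComplexSpace := inferInstanceAs (Module ℝ V)

def toComplexSpace : V ≃ₗ[ℝ] T.ComplexSpace := LinearEquiv.refl ℝ V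

instance : Module ℂ T.ComplexSpace :=
  Module.compHom V (Complex.liftAux (A := Module.End ℝ V) T.J T.J_comp_J : ℂ →+* Module.End ℝ V)

theorem complex_smul (c : ℂ) (x : T.ComplexSpace) :
    c • x = T.toComplexSpace
      (c.re • T.toComplexSpace.symm x + c.im • T.J (T.toComplexSpace.symm x)) :=
  LinearMap.congr_fun (Complex.liftAux_apply (A := Module.End ℝ V) T.J T.J_comp_J c) x

theorem I_smul (x : T.ComplexSpace) :
    Complex.I • x = T.toComplexSpace (T.J (T.toComplexSpace.symm x)) := by
  simp [complex_smul]

instance : IsScalarTower ℝ ℂ T.ComplexSpace where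
  smul_assoc r c x :=
    LinearMap.congr_fun (map_smul (Complex.liftAux (A := Module.End ℝ V) T.J T.J_comp_J) r c) x

-- Not an instance: its `Inner` would compete with the one of `InnerProductSpace ℂ`.
noncomputable def innerProductCore : InnerProductSpace.Core ℂ T.ComplexSpace where
  inner := T.hermitian
  conj_inner_symm := T.conj_hermitian
  re_inner_nonneg := T.hermitian_self_re_nonneg
  add_left := T.hermitian_add_left
  smul_left x y c := (congrArg (T.hermitian · y) (T.complex_smul c x)).trans
    (T.hermitian_smul_left c x y)
  definite _ := T.eq_zero_of_hermitian_self_eq_zero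

noncomputable instance : NormedAddCommGroup T.ComplexSpace :=
  T.innerProductCore.toNormedAddCommGroup

noncomputable instance : InnerProductSpace ℂ T.ComplexSpace :=
  .ofCore T.innerProductCore.toCore

theorem im_inner (x y : T.ComplexSpace) :
    (inner ℂ x y).im = T.ω (T.toComplexSpace.symm x) (T.toComplexSpace.symm y) :=
  rfl

variable [FiniteDimensional ℝ V]

instance : FiniteDimensional ℂ T.ComplexSpace :=
  have : FiniteDimensional ℝ T.ComplexSpace := inferInstanceAs (FiniteDimensional ℝ V)
  .of_restrictScalars_finite ℝ ℂ _

theorem two_mul_finrank_complexSpace : 2 * finrank ℂ T.ComplexSpace = finrank ℝ V := by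
  rw [← Complex.finrank_real_complex, finrank_mul_finrank, T.toComplexSpace.finrank_eq]

theorem exists_linearEquiv_conj {W : Type*} [AddCommGroup W] [Module ℝ W] [FiniteDimensional ℝ W]
    (T' : CompatibleComplexStructure W) (h : finrank ℝ V = finrank ℝ W) :
    ∃ A : V ≃ₗ[ℝ] W, (∀ x y, T'.ω (A x) (A y) = T.ω x y) ∧ ∀ x, A (T.J x) = T'.J (A x) := by
  have hrank : finrank ℂ T.ComplexSpace = finrank ℂ T'.ComplexSpace := by
    have := T.two_mul_finrank_complexSpace
    have := T'.two_mul_finrank_complexSpace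
    omega
  obtain ⟨U⟩ := exists_linearIsometryEquiv_of_finrank_eq hrank
  refine ⟨T.toComplexSpace ≪≫ₗ U.toLinearEquiv.restrictScalars ℝ ≪≫ₗ T'.toComplexSpace.symm,
    fun x y => ?_, fun x => ?_⟩
  · have := congrArg Complex.im (U.inner_map_map (T.toComplexSpace x) (T.toComplexSpace y))
    rw [T.im_inner, T'.im_inner] at this
    simpa using this
  · simpa [I_smul] using
      congrArg T'.toComplexSpace.symm (U.map_smul Complex.I (T.toComplexSpace x))

end CompatibleComplexStructure

theorem compatible_complex_structures_conjugate_general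
    {V : Type*} [AddCommGroup V] [Module ℝ V] [FiniteDimensional ℝ V]
    (ω : V →ₗ[ℝ] V →ₗ[ℝ] ℝ)
    (halt : ∀ x : V, ω x x = 0)
    (J₀ J₁ : V →ₗ[ℝ] V)
    (h₀sq : J₀ ∘ₗ J₀ = -LinearMap.id)
    (h₀symm : ∀ x y : V, ω x (J₀ y) = ω y (J₀ x))
    (h₀pos : ∀ x : V, x ≠ 0 → 0 < ω x (J₀ x))
    (h₁sq : J₁ ∘ₗ J₁ = -LinearMap.id)
    (h₁symm : ∀ x y : V, ω x (J₁ y) = ω y (J₁ x))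
    (h₁pos : ∀ x : V, x ≠ 0 → 0 < ω x (J₁ x)) :
    ∃ A : V ≃ₗ[ℝ] V,
      (∀ x y : V, ω (A x) (A y) = ω x y) ∧
      (∀ x : V, A (J₀ x) = J₁ (A x)) :=
  CompatibleComplexStructure.exists_linearEquiv_conj ⟨ω, J₀, halt, h₀sq, h₀symm, h₀pos⟩
    ⟨ω, J₁, halt, h₁sq, h₁symm, h₁pos⟩ rfl

/-- Any two complex structures `J₀`, `J₁` on a symplectic vector space
`(V, ω)` which are compatible with `ω` are conjugate by a linear symplectomorphism:
there is a linear automorphism `A` of `V` preserving `ω` with `A ∘ J₀ = J₁ ∘ A`. -/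
theorem compatible_complex_structures_conjugate
    {V : Type*} [AddCommGroup V] [Module ℝ V] [FiniteDimensional ℝ V]
    (ω : V →ₗ[ℝ] V →ₗ[ℝ] ℝ)
    (halt : ∀ x : V, ω x x = 0)
    (hnondeg : ∀ x : V, (∀ y : V, ω x y = 0) → x = 0)
    (J₀ J₁ : V →ₗ[ℝ] V)
    (h₀sq : J₀ ∘ₗ J₀ = -LinearMap.id)
    (h₀ω : ∀ x y : V, ω (J₀ x) (J₀ y) = ω x y)
    (h₀symm : ∀ x y : V, ω x (J₀ y) = ω y (J₀ x))
    (h₀pos : ∀ x : V, x ≠ 0 → 0 < ω x (J₀ x))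
    (h₁sq : J₁ ∘ₗ J₁ = -LinearMap.id)
    (h₁ω : ∀ x y : V, ω (J₁ x) (J₁ y) = ω x y)
    (h₁symm : ∀ x y : V, ω x (J₁ y) = ω y (J₁ x))
    (h₁pos : ∀ x : V, x ≠ 0 → 0 < ω x (J₁ x)) :
    ∃ A : V ≃ₗ[ℝ] V,
      (∀ x y : V, ω (A x) (A y) = ω x y) ∧
      (∀ x : V, A (J₀ x) = J₁ (A x)) :=
  compatible_complex_structures_conjugate_general ω halt J₀ J₁ h₀sq h₀symm h₀pos h₁sq h₁symm h₁pos
end
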